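/- The q-derivative in y of the deformed bivariate q-Appell polynomials satisfies D_{q,y} P_{n,q}^{(α)}(x,y;u) = [n]_q P_{n-1,q}^{(α)}(x,uy;u) for all n ≥ 1. -/
import Mathlib


open Finset

def qNum {K : Type*} [Field K] (q : K) (n : ℕ) : K := ∑ i ∈ Finset.range n, q ^ i

def qFact {K : Type*} [Field K] (q : K) : ℕ → K
  | 0 => 1
  | n + 1 => qFact q n * qNum q (n + 1)

def qBinom {K : Type*} [Field K] (q : K) (n k : ℕ) : K :=
  qFact q n / (qFact q k * qFact q (n - k))

/-- The deformed bivariate q-Appell polynomial, as a polynomial function of x and y. -/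
def Pb {K : Type*} [Field K] (q u : K) (a : ℕ → K) (n : ℕ) (x y : K) : K :=
  ∑ k ∈ Finset.range (n + 1), qBinom q n k * u ^ ((n - k).choose 2) *
    (∑ j ∈ Finset.range (k + 1), qBinom q k j * a j * x ^ (k - j)) * y ^ (n - k)

lemma qFact_ne_zero {K : Type*} [Field K] {q : K}
    (hq : ∀ n : ℕ, 0 < n → qNum q n ≠ 0) (n : ℕ) : qFact q n ≠ 0 := by
  induction n with
  | zero => simp [qFact]
  | succ m ih => exact mul_ne_zero ih (hq (m + 1) (Nat.succ_pos m))

lemma one_sub_mul_qNum {K : Type*} [Field K] (q : K) (n : ℕ) :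
    (1 - q) * qNum q n = 1 - q ^ n := by
  unfold qNum
  linear_combination (-1 : K) * geom_sum_mul q n

/-- D_{q,y} P_n(x,y;u) = [n]_q P_{n-1}(x,uy;u) for n ≥ 1. -/
theorem deformed_bivariate_qAppell_qderiv_y {K : Type*} [Field K] (q u x y : K)
    (hq : ∀ n : ℕ, 0 < n → qNum q n ≠ 0) (hq1 : q ≠ 1) (hy : y ≠ 0)
    (a : ℕ → K) (n : ℕ) (hn : 1 ≤ n) :
    (Pb q u a n x y - Pb q u a n x (q * y)) / ((1 - q) * y) =
      qNum q n * Pb q u a (n - 1) x (u * y) := by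
  obtain ⟨m, rfl⟩ : ∃ m, n = m + 1 := ⟨n - 1, by omega⟩
  have h1q : (1 : K) - q ≠ 0 := sub_ne_zero.mpr (Ne.symm hq1)
  unfold Pb
  rw [← Finset.sum_sub_distrib, Finset.sum_div, Finset.sum_range_succ]
  simp only [Nat.add_sub_cancel, Nat.sub_self, pow_zero, mul_one, sub_self, zero_div, add_zero]
  rw [Finset.mul_sum]
  refine Finset.sum_congr rfl ?_
  intro k hk
  have hk' : k ≤ m := Nat.lt_succ_iff.mp (Finset.mem_range.mp hk)
  have hs : m + 1 - k = (m - k) + 1 := by omega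
  set s := m - k with hsdef
  rw [hs]
  have hchoose : (s + 1).choose 2 = s.choose 2 + s := by
    rw [Nat.choose_succ_succ]
    simp [Nat.choose_one_right, Nat.add_comm]
  rw [hchoose]
  have hpow : y ^ (s + 1) - (q * y) ^ (s + 1)
      = (1 - q) * qNum q (s + 1) * (y ^ s * y) := by
    rw [one_sub_mul_qNum, mul_pow]
    ring
  rw [← mul_sub, hpow]
  have hdiv : (1 - q) * qNum q (s + 1) * (y ^ s * y) / ((1 - q) * y)
      = qNum q (s + 1) * y ^ s := by
    field_simp
  rw [mul_div_assoc, hdiv]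
  -- binomial identity
  have hbin : qBinom q (m + 1) k * qNum q (s + 1) = qNum q (m + 1) * qBinom q m k := by
    unfold qBinom
    rw [show m + 1 - k = s + 1 from hs, show m - k = s from rfl]
    rw [show qFact q (m + 1) = qFact q m * qNum q (m + 1) from rfl,
        show qFact q (s + 1) = qFact q s * qNum q (s + 1) from rfl]
    have h1 := qFact_ne_zero hq m
    have h2 := qFact_ne_zero hq k
    have h3 := qFact_ne_zero hq s
    have h4 := hq (s + 1) (Nat.succ_pos s)
    have h5 := hq (m + 1) (Nat.succ_pos m)
    field_simp
  rw [pow_add, mul_pow]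
  linear_combination (u ^ s.choose 2 * u ^ s *
    (∑ j ∈ Finset.range (k + 1), qBinom q k j * a j * x ^ (k - j)) * y ^ s) * hbin
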